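/- Define Δ(ρ,G) = ∫ (φ_G'/φ_G)² (1 - φ_G/(φ_G ∨ ρ))² φ_G dx for ρ > 0, where φ_G(x) = ∫ φ(x-u) dG(u). If G = Σ_{j=0}^m w_j H_j with w_j > 0 and Σ w_j = 1, then Δ(ρ,G) ≤ Σ_{j=0}^m w_j Δ(ρ/w_j, H_j). -/

import Mathlib

open MeasureTheory Real

noncomputable def gaussPDF (x : ℝ) : ℝ := (Real.sqrt (2 * Real.pi))⁻¹ * Real.exp (-x ^ 2 / 2)

noncomputable def mixDensity (G : Measure ℝ) (x : ℝ) : ℝ := ∫ u, gaussPDF (x - u) ∂G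

/-- `Δ(ρ,G) = ∫ (φ_G'/φ_G)² (1 - φ_G/(φ_G ∨ ρ))² φ_G dx`. -/
noncomputable def Delta (ρ : ℝ) (G : Measure ℝ) : ℝ :=
  ∫ x, (deriv (mixDensity G) x / mixDensity G x) ^ 2 *
    (1 - mixDensity G x / max (mixDensity G x) ρ) ^ 2 * mixDensity G x

/-! ### Basic facts about the Gaussian density -/

lemma sqrt_two_pi_pos : 0 < Real.sqrt (2 * Real.pi) := Real.sqrt_pos.2 (by positivity)

lemma one_le_sqrt_two_pi : 1 ≤ Real.sqrt (2 * Real.pi) := by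
  rw [show (1:ℝ) = Real.sqrt 1 by simp]
  exact Real.sqrt_le_sqrt (by nlinarith [Real.pi_gt_three])

lemma gaussPDF_pos (x : ℝ) : 0 < gaussPDF x :=
  mul_pos (inv_pos.2 sqrt_two_pi_pos) (Real.exp_pos _)

lemma gaussPDF_le_one (x : ℝ) : gaussPDF x ≤ 1 := by
  have h1 : (Real.sqrt (2 * Real.pi))⁻¹ ≤ 1 := by
    rw [inv_le_one_iff₀]; right; exact one_le_sqrt_two_pi
  have h2 : Real.exp (-x ^ 2 / 2) ≤ 1 := by
    rw [Real.exp_le_one_iff]; nlinarith [sq_nonneg x]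
  have := mul_le_mul h1 h2 (Real.exp_pos _).le zero_le_one
  simpa [gaussPDF] using this

lemma abs_mul_gaussPDF_le_one (x : ℝ) : |x| * gaussPDF x ≤ 1 := by
  have h1 : |x| ≤ Real.exp (x ^ 2 / 2) := by
    have := Real.add_one_le_exp (x ^ 2 / 2)
    nlinarith [sq_nonneg (|x| - 1), sq_abs x]
  have h2 : |x| * Real.exp (-x ^ 2 / 2) ≤ 1 := by
    rw [show -x^2/2 = -(x^2/2) by ring, Real.exp_neg]
    calc |x| * (Real.exp (x^2/2))⁻¹ ≤ Real.exp (x^2/2) * (Real.exp (x^2/2))⁻¹ := by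
          gcongr
      _ = 1 := mul_inv_cancel₀ (Real.exp_pos _).ne'
  have h3 : (Real.sqrt (2 * Real.pi))⁻¹ ≤ 1 := by
    rw [inv_le_one_iff₀]; right; exact one_le_sqrt_two_pi
  calc |x| * gaussPDF x = (Real.sqrt (2 * Real.pi))⁻¹ * (|x| * Real.exp (-x ^ 2 / 2)) := by
        unfold gaussPDF; ring
    _ ≤ 1 * 1 := mul_le_mul h3 h2 (by positivity) zero_le_one
    _ = 1 := by ring

lemma sq_mul_gaussPDF_le_one (x : ℝ) : x ^ 2 * gaussPDF x ≤ 1 := by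
  have h1 : x ^ 2 ≤ Real.exp (x ^ 2 / 2) := by
    have h := Real.add_one_le_exp (x ^ 2 / 4)
    have h2 : Real.exp (x ^ 2 / 2) = Real.exp (x ^ 2 / 4) * Real.exp (x ^ 2 / 4) := by
      rw [← Real.exp_add]; ring_nf
    nlinarith [sq_nonneg (x ^ 2 / 4 - 1), Real.exp_pos (x ^ 2 / 4)]
  have h2 : x ^ 2 * Real.exp (-x ^ 2 / 2) ≤ 1 := by
    rw [show -x^2/2 = -(x^2/2) by ring, Real.exp_neg]
    calc x^2 * (Real.exp (x^2/2))⁻¹ ≤ Real.exp (x^2/2) * (Real.exp (x^2/2))⁻¹ := by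
          gcongr
      _ = 1 := mul_inv_cancel₀ (Real.exp_pos _).ne'
  have h3 : (Real.sqrt (2 * Real.pi))⁻¹ ≤ 1 := by
    rw [inv_le_one_iff₀]; right; exact one_le_sqrt_two_pi
  calc x^2 * gaussPDF x = (Real.sqrt (2 * Real.pi))⁻¹ * (x^2 * Real.exp (-x ^ 2 / 2)) := by
        unfold gaussPDF; ring
    _ ≤ 1 * 1 := mul_le_mul h3 h2 (by positivity) zero_le_one
    _ = 1 := by ring

lemma continuous_gaussPDF : Continuous gaussPDF := by
  unfold gaussPDF; fun_prop

lemma hasDerivAt_gaussPDF (x : ℝ) : HasDerivAt gaussPDF (-x * gaussPDF x) x := by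
  have h1 : HasDerivAt (fun y : ℝ => -y ^ 2 / 2) (-x) x := by
    have := ((hasDerivAt_pow 2 x).neg).div_const 2
    simpa using this.congr_deriv (by push_cast; ring)
  have h2 := (h1.exp).const_mul (Real.sqrt (2 * Real.pi))⁻¹
  refine h2.congr_deriv ?_
  unfold gaussPDF; ring

/-! ### Mixture density: derivative, positivity, integrability -/

section MixFacts
variable (μ : Measure ℝ) [IsProbabilityMeasure μ]

lemma integrable_kernel (x : ℝ) : Integrable (fun u => gaussPDF (x - u)) μ := by
  refine (integrable_const (1:ℝ)).mono' ?_ ?_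
  · exact (continuous_gaussPDF.comp (continuous_const.sub continuous_id)).aestronglyMeasurable
  · refine ae_of_all _ fun u => ?_
    rw [Real.norm_eq_abs, abs_of_pos (gaussPDF_pos _)]
    exact gaussPDF_le_one _

lemma integrable_kernel' (x : ℝ) :
    Integrable (fun u => -(x - u) * gaussPDF (x - u)) μ := by
  refine (integrable_const (1:ℝ)).mono' ?_ ?_
  · exact (((continuous_const.sub continuous_id).neg).mul
      (continuous_gaussPDF.comp (continuous_const.sub continuous_id))).aestronglyMeasurable
  · refine ae_of_all _ fun u => ?_
    rw [Real.norm_eq_abs, abs_mul, abs_neg, abs_of_pos (gaussPDF_pos _)]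
    exact abs_mul_gaussPDF_le_one _

lemma hasDerivAt_mixDensity (x : ℝ) :
    HasDerivAt (mixDensity μ) (∫ u, -(x - u) * gaussPDF (x - u) ∂μ) x := by
  have h := hasDerivAt_integral_of_dominated_loc_of_deriv_le (μ := μ)
      (F := fun x u => gaussPDF (x - u))
      (F' := fun x u => -(x - u) * gaussPDF (x - u))
      (bound := fun _ => (1:ℝ)) (x₀ := x) (Metric.ball_mem_nhds x one_pos)
      (Filter.Eventually.of_forall fun y =>
        (continuous_gaussPDF.comp (continuous_const.sub continuous_id)).aestronglyMeasurable)
      (integrable_kernel μ x)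
      ((((continuous_const.sub continuous_id).neg).mul
        (continuous_gaussPDF.comp (continuous_const.sub continuous_id))).aestronglyMeasurable)
      (ae_of_all _ fun u y _ => by
        rw [Real.norm_eq_abs, abs_mul, abs_neg, abs_of_pos (gaussPDF_pos _)]
        exact abs_mul_gaussPDF_le_one _)
      (integrable_const 1)
      (ae_of_all _ fun u y _ => by
        have := (hasDerivAt_gaussPDF (y - u)).comp y ((hasDerivAt_id y).sub_const u)
        simpa [Function.comp_def] using this)
  exact h.2

lemma deriv_mixDensity (x : ℝ) :
    deriv (mixDensity μ) x = ∫ u, -(x - u) * gaussPDF (x - u) ∂μ :=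
  (hasDerivAt_mixDensity μ x).deriv

lemma continuous_mixDensity : Continuous (mixDensity μ) := by
  have h : Differentiable ℝ (mixDensity μ) := fun x =>
    (hasDerivAt_mixDensity μ x).differentiableAt
  exact h.continuous

lemma mixDensity_pos (x : ℝ) : 0 < mixDensity μ x := by
  rw [mixDensity, integral_pos_iff_support_of_nonneg
    (fun u => (gaussPDF_pos _).le) (integrable_kernel μ x)]
  have : (Function.support fun u => gaussPDF (x - u)) = Set.univ := by
    ext u; simp [Function.support, (gaussPDF_pos (x - u)).ne']
  rw [this]; simp

end MixFacts

/-! ### Cauchy–Schwarz for integrals -/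

lemma integral_cs {α : Type*} [MeasurableSpace α] (μ : Measure α) (f g : α → ℝ)
    (hf2 : Integrable (fun u => f u ^ 2) μ) (hg2 : Integrable (fun u => g u ^ 2) μ)
    (hfg : Integrable (fun u => f u * g u) μ) :
    (∫ u, f u * g u ∂μ) ^ 2 ≤ (∫ u, f u ^ 2 ∂μ) * ∫ u, g u ^ 2 ∂μ := by
  set A := ∫ u, f u ^ 2 ∂μ with hA
  set B := ∫ u, f u * g u ∂μ with hB
  set C := ∫ u, g u ^ 2 ∂μ with hC
  have key : ∀ c : ℝ, 0 ≤ c ^ 2 * A - 2 * c * B + C := by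
    intro c
    have h0 : 0 ≤ ∫ u, (c * f u - g u) ^ 2 ∂μ :=
      integral_nonneg fun u => sq_nonneg _
    have heq : ∫ u, (c * f u - g u) ^ 2 ∂μ = c ^ 2 * A - 2 * c * B + C := by
      have h1 : ∀ u, (c * f u - g u) ^ 2
          = c ^ 2 * f u ^ 2 - 2 * c * (f u * g u) + g u ^ 2 := fun u => by ring
      simp_rw [h1]
      have hint1 : Integrable (fun u => c ^ 2 * f u ^ 2 - 2 * c * (f u * g u)) μ := by
        exact (hf2.const_mul _).sub (hfg.const_mul _)
      rw [integral_add hint1 hg2,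
        integral_sub (hf2.const_mul _) (hfg.const_mul _),
        integral_const_mul, integral_const_mul]
    linarith [heq ▸ h0]
  have hA0 : 0 ≤ A := integral_nonneg fun u => sq_nonneg _
  have hC0 : 0 ≤ C := integral_nonneg fun u => sq_nonneg _
  rcases eq_or_lt_of_le hA0 with hA1 | hA1
  · by_contra hcon
    push_neg at hcon
    have hB2 : 0 < B ^ 2 := by nlinarith
    have hBne : B ≠ 0 := by intro h; rw [h] at hB2; simp at hB2
    have h := key ((C + 1) / (2 * B))
    rw [← hA1] at h
    have hval : (C + 1) / (2 * B) * B = (C + 1) / 2 := by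
      field_simp
    nlinarith [h, hval]
  · have := key (B / A)
    have h2 : (B / A) ^ 2 * A = B ^ 2 / A := by field_simp
    have h3 : 2 * (B / A) * B = 2 * (B ^ 2 / A) := by field_simp
    rw [h2, h3] at this
    have h4 : B ^ 2 / A ≤ C := by linarith
    calc B ^ 2 = B ^ 2 / A * A := by field_simp
      _ ≤ C * A := by gcongr
      _ = A * C := by ring

/-! ### The dominating function `Wfun` -/

noncomputable def Wfun (μ : Measure ℝ) (x : ℝ) : ℝ :=
  ∫ u, (x - u) ^ 2 * gaussPDF (x - u) ∂μ

section WFacts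
variable (μ : Measure ℝ) [IsProbabilityMeasure μ]

lemma integrable_kernel2 (x : ℝ) :
    Integrable (fun u => (x - u) ^ 2 * gaussPDF (x - u)) μ := by
  refine (integrable_const (1:ℝ)).mono' ?_ ?_
  · exact (((continuous_const.sub continuous_id).pow 2).mul
      (continuous_gaussPDF.comp (continuous_const.sub continuous_id))).aestronglyMeasurable
  · refine ae_of_all _ fun u => ?_
    rw [Real.norm_eq_abs, abs_of_nonneg (mul_nonneg (sq_nonneg _) (gaussPDF_pos _).le)]
    exact sq_mul_gaussPDF_le_one _

lemma integrable_kernel_abs (x : ℝ) :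
    Integrable (fun u => |x - u| * gaussPDF (x - u)) μ := by
  refine (integrable_const (1:ℝ)).mono' ?_ ?_
  · exact (((continuous_const.sub continuous_id).abs).mul
      (continuous_gaussPDF.comp (continuous_const.sub continuous_id))).aestronglyMeasurable
  · refine ae_of_all _ fun u => ?_
    rw [Real.norm_eq_abs, abs_of_nonneg (mul_nonneg (abs_nonneg _) (gaussPDF_pos _).le)]
    exact abs_mul_gaussPDF_le_one _

lemma deriv_sq_le (x : ℝ) :
    (deriv (mixDensity μ) x) ^ 2 ≤ mixDensity μ x * Wfun μ x := by
  have habs : |deriv (mixDensity μ) x| ≤ ∫ u, |x - u| * gaussPDF (x - u) ∂μ := by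
    rw [deriv_mixDensity μ x]
    have h0 := norm_integral_le_integral_norm (μ := μ) (fun u => -(x - u) * gaussPDF (x - u))
    rw [Real.norm_eq_abs] at h0
    calc |∫ u, -(x - u) * gaussPDF (x - u) ∂μ|
        ≤ ∫ u, ‖-(x - u) * gaussPDF (x - u)‖ ∂μ := h0
      _ = ∫ u, |x - u| * gaussPDF (x - u) ∂μ := by
          congr 1; funext u
          rw [Real.norm_eq_abs, abs_mul, abs_neg, abs_of_pos (gaussPDF_pos _)]
  have hcs : (∫ u, |x - u| * gaussPDF (x - u) ∂μ) ^ 2 ≤ mixDensity μ x * Wfun μ x := by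
    have h := integral_cs μ (fun u => Real.sqrt (gaussPDF (x - u)))
      (fun u => |x - u| * Real.sqrt (gaussPDF (x - u))) ?_ ?_ ?_
    · have e1 : ∀ u : ℝ, Real.sqrt (gaussPDF (x - u)) *
          (|x - u| * Real.sqrt (gaussPDF (x - u))) = |x - u| * gaussPDF (x - u) := fun u => by
        rw [show Real.sqrt (gaussPDF (x-u)) * (|x - u| * Real.sqrt (gaussPDF (x-u)))
          = |x - u| * (Real.sqrt (gaussPDF (x-u)) * Real.sqrt (gaussPDF (x-u))) by ring,
          Real.mul_self_sqrt (gaussPDF_pos _).le]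
      have e2 : ∀ u : ℝ, Real.sqrt (gaussPDF (x - u)) ^ 2 = gaussPDF (x - u) := fun u =>
        Real.sq_sqrt (gaussPDF_pos _).le
      have e3 : ∀ u : ℝ, (|x - u| * Real.sqrt (gaussPDF (x - u))) ^ 2
          = (x - u) ^ 2 * gaussPDF (x - u) := fun u => by
        rw [mul_pow, sq_abs, e2]
      simp_rw [e1, e2, e3] at h
      exact h
    · simp_rw [Real.sq_sqrt (gaussPDF_pos _).le]
      exact integrable_kernel μ x
    · have e3 : ∀ u : ℝ, (|x - u| * Real.sqrt (gaussPDF (x - u))) ^ 2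
          = (x - u) ^ 2 * gaussPDF (x - u) := fun u => by
        rw [mul_pow, sq_abs, Real.sq_sqrt (gaussPDF_pos _).le]
      simp_rw [e3]
      exact integrable_kernel2 μ x
    · have e1 : ∀ u : ℝ, Real.sqrt (gaussPDF (x - u)) *
          (|x - u| * Real.sqrt (gaussPDF (x - u))) = |x - u| * gaussPDF (x - u) := fun u => by
        rw [show Real.sqrt (gaussPDF (x-u)) * (|x - u| * Real.sqrt (gaussPDF (x-u)))
          = |x - u| * (Real.sqrt (gaussPDF (x-u)) * Real.sqrt (gaussPDF (x-u))) by ring,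
          Real.mul_self_sqrt (gaussPDF_pos _).le]
      simp_rw [e1]
      exact integrable_kernel_abs μ x
  calc (deriv (mixDensity μ) x) ^ 2 = |deriv (mixDensity μ) x| ^ 2 := (sq_abs _).symm
    _ ≤ (∫ u, |x - u| * gaussPDF (x - u) ∂μ) ^ 2 := by
        apply pow_le_pow_left₀ (abs_nonneg _) habs
    _ ≤ mixDensity μ x * Wfun μ x := hcs

lemma integrable_sq_gauss : Integrable (fun t : ℝ => t ^ 2 * gaussPDF t) := by
  have h : Integrable (fun t : ℝ => t ^ (2:ℝ) * Real.exp (-(1/2) * t ^ 2)) :=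
    integrable_rpow_mul_exp_neg_mul_sq (by norm_num) (by norm_num)
  have h2 := h.const_mul (Real.sqrt (2 * Real.pi))⁻¹
  refine h2.congr (ae_of_all _ fun t => ?_)
  show (Real.sqrt (2*Real.pi))⁻¹ * (t ^ (2:ℝ) * Real.exp (-(1/2) * t^2)) = t^2 * gaussPDF t
  rw [Real.rpow_two]
  unfold gaussPDF
  rw [show -(1/2) * t ^ 2 = -t^2/2 by ring]
  ring

lemma integrable_Wfun : Integrable (Wfun μ) := by
  have hk : Continuous (fun p : ℝ × ℝ => (p.1 - p.2) ^ 2 * gaussPDF (p.1 - p.2)) :=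
    ((continuous_fst.sub continuous_snd).pow 2).mul
      (continuous_gaussPDF.comp (continuous_fst.sub continuous_snd))
  constructor
  · exact (hk.stronglyMeasurable.integral_prod_right' (ν := μ)).aestronglyMeasurable
  · rw [HasFiniteIntegral]
    have hb : ∀ x : ℝ, (‖Wfun μ x‖₊ : ENNReal) ≤ ∫⁻ u, ‖(x - u) ^ 2 * gaussPDF (x - u)‖₊ ∂μ :=
      fun x => enorm_integral_le_lintegral_enorm _
    calc ∫⁻ x, ‖Wfun μ x‖₊ ≤ ∫⁻ x, ∫⁻ u, ‖(x - u) ^ 2 * gaussPDF (x - u)‖₊ ∂μ :=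
          lintegral_mono hb
      _ = ∫⁻ u, ∫⁻ x, ‖(x - u) ^ 2 * gaussPDF (x - u)‖₊ ∂volume ∂μ := by
          rw [lintegral_lintegral_swap]
          exact (hk.measurable.enorm).aemeasurable
      _ = ∫⁻ u, ∫⁻ t, ‖t ^ 2 * gaussPDF t‖₊ ∂volume ∂μ := by
          refine lintegral_congr fun u => ?_
          exact (measurePreserving_sub_right volume u).lintegral_comp
            ((continuous_id.pow 2).mul continuous_gaussPDF).measurable.enorm
      _ = ∫⁻ t, ‖t ^ 2 * gaussPDF t‖₊ ∂volume := by
          rw [lintegral_const, measure_univ, mul_one]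
      _ < ⊤ := integrable_sq_gauss.2

end WFacts

/-! ### The Delta integrand -/

noncomputable def DIntegrand (ρ : ℝ) (μ : Measure ℝ) (x : ℝ) : ℝ :=
  (deriv (mixDensity μ) x / mixDensity μ x) ^ 2 *
    (1 - mixDensity μ x / max (mixDensity μ x) ρ) ^ 2 * mixDensity μ x

lemma Delta_eq (ρ : ℝ) (μ : Measure ℝ) : Delta ρ μ = ∫ x, DIntegrand ρ μ x := rfl

section DFacts
variable (μ : Measure ℝ) [IsProbabilityMeasure μ] (r : ℝ)

lemma DIntegrand_nonneg (x : ℝ) : 0 ≤ DIntegrand r μ x :=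
  mul_nonneg (mul_nonneg (sq_nonneg _) (sq_nonneg _)) (mixDensity_pos μ x).le

lemma DIntegrand_le_Wfun (x : ℝ) : DIntegrand r μ x ≤ Wfun μ x := by
  set b := deriv (mixDensity μ) x with hb
  set a := mixDensity μ x with ha
  have hapos : 0 < a := mixDensity_pos μ x
  have hc0 : 0 ≤ 1 - a / max a r := by
    rw [sub_nonneg]
    exact div_le_one_of_le₀ (le_max_left _ _) (le_max_of_le_left hapos.le)
  have hc1 : 1 - a / max a r ≤ 1 := by
    have : 0 ≤ a / max a r := div_nonneg hapos.le (le_max_of_le_left hapos.le)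
    linarith
  have hcsq : (1 - a / max a r) ^ 2 ≤ 1 := by nlinarith
  have h1 : DIntegrand r μ x ≤ (b / a) ^ 2 * a := by
    rw [DIntegrand, ← hb, ← ha]
    calc (b / a) ^ 2 * (1 - a / max a r) ^ 2 * a
        = ((b / a) ^ 2 * a) * (1 - a / max a r) ^ 2 := by ring
      _ ≤ ((b / a) ^ 2 * a) * 1 :=
          mul_le_mul_of_nonneg_left hcsq (mul_nonneg (sq_nonneg _) hapos.le)
      _ = (b / a) ^ 2 * a := by ring
  have h2 : (b / a) ^ 2 * a = b ^ 2 / a := by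
    field_simp
  have h3 : b ^ 2 / a ≤ Wfun μ x := by
    rw [div_le_iff₀ hapos]
    calc b ^ 2 ≤ a * Wfun μ x := deriv_sq_le μ x
      _ = Wfun μ x * a := mul_comm _ _
  linarith [h1, h2 ▸ h3]

lemma measurable_DIntegrand : Measurable (DIntegrand r μ) := by
  have hd : Measurable (deriv (mixDensity μ)) := measurable_deriv _
  have hm : Measurable (mixDensity μ) := (continuous_mixDensity μ).measurable
  exact (((hd.div hm).pow_const 2).mul
    ((measurable_const.sub (hm.div (hm.max measurable_const))).pow_const 2)).mul hm

lemma integrable_DIntegrand : Integrable (DIntegrand r μ) := by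
  refine (integrable_Wfun μ).mono' (measurable_DIntegrand μ r).aestronglyMeasurable ?_
  refine ae_of_all _ fun x => ?_
  rw [Real.norm_eq_abs, abs_of_nonneg (DIntegrand_nonneg μ r x)]
  exact DIntegrand_le_Wfun μ r x

end DFacts

/-! ### Pointwise sum inequality -/

lemma ratio_mono {s t ρ : ℝ} (hs : 0 < s) (hst : s ≤ t) (hρ : 0 < ρ) :
    s / max s ρ ≤ t / max t ρ := by
  rcases le_total t ρ with h | h
  · rw [max_eq_right h, max_eq_right (hst.trans h)]
    gcongr
  · rw [max_eq_left h, div_self (hs.trans_le hst).ne']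
    exact div_le_one_of_le₀ (le_max_left _ _) (le_max_of_le_right hρ.le)

lemma scale_max (w a ρ : ℝ) (hw : 0 < w) :
    w * a / max (w * a) ρ = a / max a (ρ / w) := by
  have h1 : max (w * a) ρ = w * max a (ρ / w) := by
    rw [mul_max_of_nonneg _ _ hw.le, mul_div_cancel₀ _ hw.ne']
  rw [h1, mul_div_mul_left _ _ hw.ne']

lemma sum_ineq (s : Finset ℕ) (w a b : ℕ → ℝ) (ρ : ℝ) (hρ : 0 < ρ)
    (hw : ∀ j ∈ s, 0 < w j) (ha : ∀ j ∈ s, 0 < a j) :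
    ((∑ j ∈ s, w j * b j) / (∑ j ∈ s, w j * a j)) ^ 2 *
      (1 - (∑ j ∈ s, w j * a j) / max (∑ j ∈ s, w j * a j) ρ) ^ 2 *
      (∑ j ∈ s, w j * a j)
    ≤ ∑ j ∈ s, w j *
        ((b j / a j) ^ 2 * (1 - a j / max (a j) (ρ / w j)) ^ 2 * a j) := by
  rcases s.eq_empty_or_nonempty with rfl | hs
  · simp
  set A := ∑ j ∈ s, w j * a j with hA
  set B := ∑ j ∈ s, w j * b j with hB
  set C := 1 - A / max A ρ with hC
  set c := fun j => 1 - a j / max (a j) (ρ / w j) with hc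
  have hApos : 0 < A := Finset.sum_pos (fun j hj => mul_pos (hw j hj) (ha j hj)) hs
  have hC0 : 0 ≤ C := by
    rw [hC, sub_nonneg]
    exact div_le_one_of_le₀ (le_max_left _ _) (le_max_of_le_right hρ.le)
  have hCc : ∀ j ∈ s, C ≤ c j := fun j hj => by
    rw [hC, hc, sub_le_sub_iff_left, ← scale_max (w j) (a j) ρ (hw j hj)]
    exact ratio_mono (mul_pos (hw j hj) (ha j hj))
      (Finset.single_le_sum (f := fun j => w j * a j)
        (fun i hi => (mul_pos (hw i hi) (ha i hi)).le) hj) hρ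
  have hBabs : |B| ≤ ∑ j ∈ s, w j * |b j| := by
    rw [hB]
    calc |∑ j ∈ s, w j * b j| ≤ ∑ j ∈ s, |w j * b j| := Finset.abs_sum_le_sum_abs _ _
      _ = ∑ j ∈ s, w j * |b j| := Finset.sum_congr rfl fun j hj => by
          rw [abs_mul, abs_of_pos (hw j hj)]
  have hBC : |B| * C ≤ ∑ j ∈ s, w j * |b j| * c j := by
    calc |B| * C ≤ (∑ j ∈ s, w j * |b j|) * C :=
          mul_le_mul_of_nonneg_right hBabs hC0
      _ = ∑ j ∈ s, w j * |b j| * C := by rw [Finset.sum_mul]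
      _ ≤ ∑ j ∈ s, w j * |b j| * c j := Finset.sum_le_sum fun j hj =>
          mul_le_mul_of_nonneg_left (hCc j hj)
            (mul_nonneg (hw j hj).le (abs_nonneg _))
  set T := ∑ j ∈ s, w j * (b j ^ 2 * c j ^ 2 / a j) with hT
  have hCS : (∑ j ∈ s, w j * |b j| * c j) ^ 2 ≤ A * T := by
    have h := Finset.sum_mul_sq_le_sq_mul_sq s
      (fun j => Real.sqrt (w j * a j))
      (fun j => Real.sqrt (w j / a j) * (|b j| * c j))
    have e1 : ∀ j ∈ s, Real.sqrt (w j * a j) * (Real.sqrt (w j / a j) * (|b j| * c j))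
        = w j * |b j| * c j := fun j hj => by
      rw [← mul_assoc, ← Real.sqrt_mul (mul_pos (hw j hj) (ha j hj)).le,
        show w j * a j * (w j / a j) = w j ^ 2 by
          field_simp [(ha j hj).ne'],
        Real.sqrt_sq (hw j hj).le]
      ring
    have e2 : ∀ j ∈ s, Real.sqrt (w j * a j) ^ 2 = w j * a j := fun j hj =>
      Real.sq_sqrt (mul_pos (hw j hj) (ha j hj)).le
    have e3 : ∀ j ∈ s, (Real.sqrt (w j / a j) * (|b j| * c j)) ^ 2
        = w j * (b j ^ 2 * c j ^ 2 / a j) := fun j hj => by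
      rw [mul_pow, Real.sq_sqrt (div_pos (hw j hj) (ha j hj)).le, mul_pow, sq_abs,
        div_mul_eq_mul_div, mul_div_assoc]
    rw [Finset.sum_congr rfl e1, Finset.sum_congr rfl e2, Finset.sum_congr rfl e3] at h
    exact h
  have hfinal : (B / A) ^ 2 * C ^ 2 * A ≤ T := by
    have h1 : (B / A) ^ 2 * C ^ 2 * A = (|B| * C) ^ 2 / A := by
      rw [mul_pow, sq_abs]
      field_simp
    rw [h1, div_le_iff₀ hApos]
    calc (|B| * C) ^ 2 ≤ (∑ j ∈ s, w j * |b j| * c j) ^ 2 := by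
          apply pow_le_pow_left₀ (mul_nonneg (abs_nonneg _) hC0) hBC
      _ ≤ A * T := hCS
      _ = T * A := mul_comm _ _
  calc (B / A) ^ 2 * C ^ 2 * A ≤ T := hfinal
    _ = ∑ j ∈ s, w j * ((b j / a j) ^ 2 * c j ^ 2 * a j) :=
      Finset.sum_congr rfl fun j hj => by
        rw [div_pow]
        rw [show b j ^ 2 / a j ^ 2 * c j ^ 2 * a j = b j ^ 2 * c j ^ 2 * (a j / a j ^ 2 * 1) by ring,
          show a j / a j ^ 2 = (a j)⁻¹ by
            rw [sq]; rw [div_mul_eq_div_div, div_self (ha j hj).ne', one_div]]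
        rw [div_eq_mul_inv]
        ring

/-! ### Main theorem -/

theorem stmt_11 (ρ : ℝ) (hρ : 0 < ρ) (m : ℕ) (w : ℕ → ℝ) (hw : ∀ j, 0 < w j)
    (hw1 : ∑ j ∈ Finset.range (m + 1), w j = 1)
    (H : ℕ → Measure ℝ) (hH : ∀ j, IsProbabilityMeasure (H j))
    (G : Measure ℝ)
    (hG : G = ∑ j ∈ Finset.range (m + 1), ENNReal.ofReal (w j) • H j) :
    Delta ρ G ≤ ∑ j ∈ Finset.range (m + 1), w j * Delta (ρ / w j) (H j) := by
  have hHinst : ∀ j, IsProbabilityMeasure (H j) := hH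
  haveI hGprob : IsProbabilityMeasure G := by
    constructor
    rw [hG, Measure.finset_sum_apply]
    have : ∀ j ∈ Finset.range (m + 1),
        (ENNReal.ofReal (w j) • H j) Set.univ = ENNReal.ofReal (w j) := fun j hj => by
      haveI := hH j
      rw [Measure.smul_apply, measure_univ, smul_eq_mul, mul_one]
    rw [Finset.sum_congr rfl this, ← ENNReal.ofReal_sum_of_nonneg
      (fun j hj => (hw j).le), hw1, ENNReal.ofReal_one]
  -- splitting integrals over G
  have hsplit : ∀ f : ℝ → ℝ, (∀ j, Integrable f (H j)) →
      ∫ u, f u ∂G = ∑ j ∈ Finset.range (m + 1), w j * ∫ u, f u ∂(H j) := by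
    intro f hf
    rw [hG, integral_finset_sum_measure (fun j hj => (hf j).smul_measure ENNReal.ofReal_ne_top)]
    refine Finset.sum_congr rfl fun j hj => ?_
    rw [integral_smul_measure, ENNReal.toReal_ofReal (hw j).le, smul_eq_mul]
  have hmix : ∀ x, mixDensity G x
      = ∑ j ∈ Finset.range (m + 1), w j * mixDensity (H j) x := fun x => by
    rw [mixDensity]
    exact hsplit _ fun j => by haveI := hH j; exact integrable_kernel (H j) x
  have hderiv : ∀ x, deriv (mixDensity G) x
      = ∑ j ∈ Finset.range (m + 1), w j * deriv (mixDensity (H j)) x := fun x => by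
    rw [deriv_mixDensity G x,
      hsplit _ fun j => by haveI := hH j; exact integrable_kernel' (H j) x]
    exact Finset.sum_congr rfl fun j hj => by
      haveI := hH j
      rw [deriv_mixDensity (H j) x]
  -- pointwise inequality
  have hpt : ∀ x, DIntegrand ρ G x
      ≤ ∑ j ∈ Finset.range (m + 1), w j * DIntegrand (ρ / w j) (H j) x := fun x => by
    rw [DIntegrand, hmix x, hderiv x]
    have := sum_ineq (Finset.range (m + 1)) w
      (fun j => mixDensity (H j) x) (fun j => deriv (mixDensity (H j)) x) ρ hρ
      (fun j _ => hw j) (fun j _ => by haveI := hH j; exact mixDensity_pos (H j) x)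
    exact this
  -- integrability
  have hintG : Integrable (DIntegrand ρ G) := integrable_DIntegrand G ρ
  have hintH : ∀ j, Integrable (DIntegrand (ρ / w j) (H j)) := fun j => by
    haveI := hH j
    exact integrable_DIntegrand (H j) (ρ / w j)
  have hsum_int : Integrable
      (fun x => ∑ j ∈ Finset.range (m + 1), w j * DIntegrand (ρ / w j) (H j) x) :=
    integrable_finset_sum _ fun j hj => (hintH j).const_mul _
  calc Delta ρ G = ∫ x, DIntegrand ρ G x := Delta_eq ρ G
    _ ≤ ∫ x, ∑ j ∈ Finset.range (m + 1), w j * DIntegrand (ρ / w j) (H j) x :=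
        integral_mono hintG hsum_int hpt
    _ = ∑ j ∈ Finset.range (m + 1), ∫ x, w j * DIntegrand (ρ / w j) (H j) x :=
        integral_finset_sum _ fun j hj => (hintH j).const_mul _
    _ = ∑ j ∈ Finset.range (m + 1), w j * Delta (ρ / w j) (H j) :=
        Finset.sum_congr rfl fun j hj => by
          rw [integral_const_mul, Delta_eq]
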